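/- arXiv:2409.01285 — 9 statements merged into one kernel-verified Lean document; each statement's English description precedes it below -/
import Mathlib

section
/- Let d ≥ 1, m ≥ 3, s = 2d+3, a ∈ {1,2}, and suppose ℓ = k·s + (−1)^a·2·d·m for some integer k. Then for this ℓ, d ≤ (|d·(m−1) − (d+a)·ℓ| mod s) ≤ d+3; in fact (|d·(m−1) − (d+a)·ℓ| mod s) equals d or d+3. -/
lemma abs_emod_eq_or_of_modEq_neg {X d s : ℤ} (hd : 0 < d) (hds : d < s)
    (h : X ≡ -d [ZMOD s]) : |X| % s = d ∨ |X| % s = s - d := by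
  rcases abs_cases X with ⟨habs, -⟩ | ⟨habs, -⟩ <;> rw [habs]
  · right
    calc X % s = (s - d) % s := by rw [h, sub_eq_neg_add, Int.add_emod_right]
      _ = s - d := Int.emod_eq_of_lt (by omega) (by omega)
  · left
    calc -X % s = d % s := (Int.neg_modEq_neg.mpr h).trans (by rw [neg_neg])
      _ = d := Int.emod_eq_of_lt (by omega) hds

-- Modulo s the coefficient of d·m is 1 - (-1)^a·2(d+a) = (-1)^(a+1)·s, which vanishes.
lemma modEq_neg_of_eq_mul_add_neg_one_pow {d m s ℓ k : ℤ} {a : ℕ}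
    (hs : s = 2 * d + 3) (ha : a = 1 ∨ a = 2)
    (hl : ℓ = k * s + (-1) ^ a * 2 * d * m) :
    d * (m - 1) - (d + a) * ℓ ≡ -d [ZMOD s] := by
  refine Int.modEq_iff_dvd.mpr ⟨(d + a) * k + (-1) ^ a * d * m, ?_⟩
  rcases ha with rfl | rfl <;> subst hl hs <;> push_cast <;> ring

theorem stmt_7_general (d m s ℓ k : ℤ) (a : ℕ) (hd : 1 ≤ d)
    (hs : s = 2 * d + 3) (ha : a = 1 ∨ a = 2)
    (hl : ℓ = k * s + (-1) ^ a * 2 * d * m) :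
    (d ≤ |d * (m - 1) - (d + a) * ℓ| % s ∧ |d * (m - 1) - (d + a) * ℓ| % s ≤ d + 3) ∧
      (|d * (m - 1) - (d + a) * ℓ| % s = d ∨ |d * (m - 1) - (d + a) * ℓ| % s = d + 3) := by
  have hmod := modEq_neg_of_eq_mul_add_neg_one_pow hs ha hl
  have hcases := abs_emod_eq_or_of_modEq_neg (by omega) (by omega) hmod
  rw [hs, show 2 * d + 3 - d = d + 3 by ring] at hcases
  rw [hs]
  omega

theorem stmt_7 (d m s ℓ k : ℤ) (a : ℕ) (hd : 1 ≤ d) (hm : 3 ≤ m)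
    (hs : s = 2 * d + 3) (ha : a = 1 ∨ a = 2)
    (hl : ℓ = k * s + (-1) ^ a * 2 * d * m) :
    (d ≤ |d * (m - 1) - (d + a) * ℓ| % s ∧ |d * (m - 1) - (d + a) * ℓ| % s ≤ d + 3) ∧
      (|d * (m - 1) - (d + a) * ℓ| % s = d ∨ |d * (m - 1) - (d + a) * ℓ| % s = d + 3) :=
  stmt_7_general d m s ℓ k a hd hs ha hl
end

section
/- Let t ≥ 0, d = 3t+2, s = 2d+3 = 6t+7, m ≥ 3, a ∈ {1,2}, and suppose ℓ = k·s − (2t+3)·(d+a)·m for some integer k. Then (|(d+a)·(m−1) − d·ℓ| mod s) ∈ {d+1, d+2}; in particular d ≤ (|(d+a)·(m−1) − d·ℓ| mod s) ≤ d+3. -/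
/-! Since d(2t+3) = (t+1)s - 1, the term -dℓ is congruent to -(d+a)m mod s, so the expression
is congruent to -(d+a); its absolute value thus leaves remainder d+a or s-(d+a) = d+3-a. -/

theorem abs_emod_eq_or_of_modEq_neg_s8 {x r s : ℤ} (h : x ≡ -r [ZMOD s]) (hr : 0 < r)
    (hrs : r < s) : |x| % s = r ∨ |x| % s = s - r := by
  rcases abs_cases x with ⟨hx, -⟩ | ⟨hx, -⟩
  · right
    rw [hx, h, show -r = s - r + s * (-1) by ring, Int.add_mul_emod_self_left,
      Int.emod_eq_of_lt (by omega) (by omega)]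
  · left
    rw [hx, show -x ≡ r [ZMOD s] by simpa using h.neg, Int.emod_eq_of_lt hr.le hrs]

theorem sub_mul_sub_modEq_neg {b c d k m s : ℤ} (hdc : d * c ≡ -1 [ZMOD s]) :
    b * (m - 1) - d * (k * s - c * b * m) ≡ -b [ZMOD s] := by
  obtain ⟨j, hj⟩ := Int.modEq_iff_dvd.mp hdc
  exact Int.modEq_iff_dvd.mpr ⟨d * k + b * m * j, by linear_combination b * m * hj⟩

theorem mul_modEq_neg_one (t : ℤ) : (3 * t + 2) * (2 * t + 3) ≡ -1 [ZMOD 2 * (3 * t + 2) + 3] :=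
  Int.modEq_iff_dvd.mpr ⟨-(t + 1), by ring⟩

theorem stmt_8_general (t d s m ℓ k : ℤ) (a : ℕ) (ht : 0 ≤ t) (hd : d = 3 * t + 2)
    (hs : s = 2 * d + 3) (ha : a = 1 ∨ a = 2)
    (hl : ℓ = k * s - (2 * t + 3) * (d + a) * m) :
    |(d + a) * (m - 1) - d * ℓ| % s ∈ ({d + 1, d + 2} : Set ℤ) ∧
      d ≤ |(d + a) * (m - 1) - d * ℓ| % s ∧ |(d + a) * (m - 1) - d * ℓ| % s ≤ d + 3 := by
  have hdc : d * (2 * t + 3) ≡ -1 [ZMOD s] := hs ▸ hd ▸ mul_modEq_neg_one t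
  have hrem := abs_emod_eq_or_of_modEq_neg_s8 (hl ▸ sub_mul_sub_modEq_neg hdc) (by omega) (by omega)
  simp only [Set.mem_insert_iff, Set.mem_singleton_iff]
  omega

theorem stmt_8 (t d s m ℓ k : ℤ) (a : ℕ) (ht : 0 ≤ t) (hd : d = 3 * t + 2)
    (hs : s = 2 * d + 3) (hm : 3 ≤ m) (ha : a = 1 ∨ a = 2)
    (hl : ℓ = k * s - (2 * t + 3) * (d + a) * m) :
    |(d + a) * (m - 1) - d * ℓ| % s ∈ ({d + 1, d + 2} : Set ℤ) ∧
      d ≤ |(d + a) * (m - 1) - d * ℓ| % s ∧ |(d + a) * (m - 1) - d * ℓ| % s ≤ d + 3 :=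
  stmt_8_general t d s m ℓ k a ht hd hs ha hl
end

section
/- Let t ≥ 1, d = 3t, s = 6t+3, and suppose m = p·s + 3t' for some integers p ≥ 0 and t' with 0 ≤ t' ≤ 2t and m ≥ 3. Let a ∈ {1,2}, i ∈ {0,1,2}, and ℓ = k·s + (i+a−1)·(s/3) − (−1)^a·t' for some integer k. Then (|(d+a)·(m−1) − d·ℓ| mod s) ∈ {d+1, d+2}. -/
/-! With `s = 6t + 3` and `d = 3t`, one has `d (2t + 1) = t s ≡ 0` and `m ≡ 3t'`, so modulo `s`
the quantity `(d + a)(m - 1) - d ℓ` reduces to `(3t + a)(3t' - 1) + (-1)^a 3t t' ≡ -(d + a)`,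
i.e. to `d + 3 - a`. Since `(d + 1) + (d + 2) = s`, taking the absolute value can only swap the
two residues `d + 1` and `d + 2`. -/

theorem Int.abs_emod_eq_or_eq_sub_of_modEq {n r x : ℤ} (hr : 0 < r) (hrn : r < n)
    (hx : x ≡ r [ZMOD n]) : |x| % n = r ∨ |x| % n = n - r := by
  rcases abs_choice x with h | h <;> rw [h]
  · left
    rw [hx, Int.emod_eq_of_lt hr.le hrn]
  · right
    have hneg : -x ≡ n - r [ZMOD n] :=
      (Int.neg_modEq_neg.mpr hx).trans (Int.modEq_iff_add_fac.mpr ⟨1, by ring⟩)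
    rw [hneg, Int.emod_eq_of_lt (by omega) (by omega)]

theorem modEq_three_mul_add_three_sub (t p t' k i : ℤ) (a : ℕ) (ha : a = 1 ∨ a = 2) :
    (3 * t + a) * (p * (6 * t + 3) + 3 * t' - 1)
        - 3 * t * (k * (6 * t + 3) + (i + a - 1) * (2 * t + 1) - (-1) ^ a * t')
      ≡ 3 * t + 3 - a [ZMOD 6 * t + 3] := by
  refine (Int.modEq_iff_add_fac.mpr ?_).symm
  rcases ha with rfl | rfl
  · exact ⟨(3 * t + 1) * p - 3 * t * k + t' - t * i - 1, by push_cast; ring⟩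
  · exact ⟨(3 * t + 2) * p - 3 * t * k + 2 * t' - t * i - t - 1, by push_cast; ring⟩

theorem stmt_10_general (t d s m p t' ℓ k i : ℤ) (a : ℕ) (ht : 1 ≤ t) (hd : d = 3 * t)
    (hs : s = 6 * t + 3) (hm : m = p * s + 3 * t') (ha : a = 1 ∨ a = 2)
    (hl : ℓ = k * s + (i + a - 1) * (s / 3) - (-1) ^ a * t') :
    |(d + a) * (m - 1) - d * ℓ| % s ∈ ({d + 1, d + 2} : Set ℤ) := by
  have hs3 : s / 3 = 2 * t + 1 := by omega
  rw [hs3] at hl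
  subst hd hs hm hl
  have hx := Int.abs_emod_eq_or_eq_sub_of_modEq (by omega) (by omega)
    (modEq_three_mul_add_three_sub t p t' k i a ha)
  simp only [Set.mem_insert_iff, Set.mem_singleton_iff]
  omega

theorem stmt_10 (t d s m p t' ℓ k i : ℤ) (a : ℕ) (ht : 1 ≤ t) (hd : d = 3 * t)
    (hs : s = 6 * t + 3) (hp : 0 ≤ p) (ht' : 0 ≤ t' ∧ t' ≤ 2 * t)
    (hm : m = p * s + 3 * t') (hm3 : 3 ≤ m)
    (ha : a = 1 ∨ a = 2) (hi : i = 0 ∨ i = 1 ∨ i = 2)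
    (hl : ℓ = k * s + (i + a - 1) * (s / 3) - (-1) ^ a * t') :
    |(d + a) * (m - 1) - d * ℓ| % s ∈ ({d + 1, d + 2} : Set ℤ) :=
  stmt_10_general t d s m p t' ℓ k i a ht hd hs hm ha hl
end

section
/- Let d ≥ 1, m ≥ 3, s = 2d+3, a ∈ {1,2}, and suppose ℓ = k·s + (−1)^a·2·m for some integer k, and j' ∈ {−1, 1}. Then d ≤ (|m − 1 − (d+a)·(j'+ℓ)| mod s) ≤ d+3. -/
/-!
Modulo `s = 2d + 3` we have `2(d + a) ≡ (-1)^a`, so the twist contributes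
`(d + a)ℓ ≡ (d + a)(-1)^a·2m ≡ m`, which cancels the `m` in the label difference. What is left is
`-1 - (d + a)j' = -j'(d + a + j')`, i.e. `±r` with `d ≤ r ≤ d + 3`; the absolute value then has
residue `r` or `s - r`, and the window `[d, d + 3]` is symmetric under `r ↦ s - r`.
-/

namespace Int

lemma abs_emod_eq_or_of_modEq_or_modEq_neg {s x r : ℤ} (hr : 0 < r) (hrs : r < s)
    (h : x ≡ r [ZMOD s] ∨ x ≡ -r [ZMOD s]) : |x| % s = r ∨ |x| % s = s - r := by
  have habs : |x| ≡ r [ZMOD s] ∨ |x| ≡ -r [ZMOD s] := by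
    rcases abs_choice x with hx | hx <;> rw [hx]
    · exact h
    · exact h.symm.imp (fun h => by simpa using h.neg) ModEq.neg
  have hneg : -r ≡ s - r [ZMOD s] := modEq_iff_dvd.mpr ⟨1, by ring⟩
  rcases habs with h | h
  · exact .inl (h.eq.trans (emod_eq_of_lt hr.le hrs))
  · exact .inr ((h.trans hneg).eq.trans (emod_eq_of_lt (by omega) (by omega)))

lemma two_mul_add_modEq_neg_one_pow {d : ℤ} {a : ℕ} (ha : a = 1 ∨ a = 2) :
    2 * (d + a) ≡ (-1) ^ a [ZMOD 2 * d + 3] := by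
  rcases ha with rfl | rfl
  · exact modEq_iff_dvd.mpr ⟨-1, by push_cast; ring⟩
  · exact (modEq_iff_dvd.mpr ⟨1, by push_cast; ring⟩).symm

end Int

lemma add_mul_twist_modEq {d m k : ℤ} {a : ℕ} (ha : a = 1 ∨ a = 2) :
    (d + a) * (k * (2 * d + 3) + (-1) ^ a * 2 * m) ≡ m [ZMOD 2 * d + 3] := by
  have hsq : ((-1 : ℤ) ^ a) ^ 2 = 1 := by rw [← pow_mul, mul_comm, pow_mul, neg_one_sq, one_pow]
  calc (d + a) * (k * (2 * d + 3) + (-1) ^ a * 2 * m)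
      = (2 * d + 3) * ((d + a) * k) + (-1) ^ a * m * (2 * (d + a)) := by ring
    _ ≡ 0 + (-1) ^ a * m * (-1) ^ a [ZMOD 2 * d + 3] :=
        (Int.modEq_zero_iff_dvd.mpr (dvd_mul_right _ _)).add
          ((Int.two_mul_add_modEq_neg_one_pow ha).mul_left _)
    _ = m := by linear_combination m * hsq

theorem stmt_11_general (d m s ℓ k j' : ℤ) (a : ℕ) (hd : 1 ≤ d)
    (hs : s = 2 * d + 3) (ha : a = 1 ∨ a = 2)
    (hl : ℓ = k * s + (-1) ^ a * 2 * m) (hj : j' = -1 ∨ j' = 1) :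
    d ≤ |m - 1 - (d + a) * (j' + ℓ)| % s ∧ |m - 1 - (d + a) * (j' + ℓ)| % s ≤ d + 3 := by
  subst hs hl
  set X := m - 1 - (d + a) * (j' + (k * (2 * d + 3) + (-1) ^ a * 2 * m))
  have hX : X ≡ -j' * (d + a + j') [ZMOD 2 * d + 3] :=
    calc X = m - (1 + (d + a) * j') - (d + a) * (k * (2 * d + 3) + (-1) ^ a * 2 * m) := by ring
      _ ≡ m - (1 + (d + a) * j') - m [ZMOD 2 * d + 3] := .sub_left _ (add_mul_twist_modEq ha)
      _ = -j' * (d + a + j') := by rcases hj with rfl | rfl <;> ring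
  have hsign : X ≡ d + a + j' [ZMOD 2 * d + 3] ∨ X ≡ -(d + a + j') [ZMOD 2 * d + 3] := by
    rcases hj with rfl | rfl
    · exact .inl (by simpa using hX)
    · exact .inr (by simpa using hX)
  have ha_cast : (a : ℤ) = 1 ∨ (a : ℤ) = 2 := by omega
  rcases Int.abs_emod_eq_or_of_modEq_or_modEq_neg (by omega) (by omega) hsign with h | h <;>
    rw [h] <;> omega

theorem stmt_11 (d m s ℓ k j' : ℤ) (a : ℕ) (hd : 1 ≤ d) (hm : 3 ≤ m)
    (hs : s = 2 * d + 3) (ha : a = 1 ∨ a = 2)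
    (hl : ℓ = k * s + (-1) ^ a * 2 * m) (hj : j' = -1 ∨ j' = 1) :
    d ≤ |m - 1 - (d + a) * (j' + ℓ)| % s ∧ |m - 1 - (d + a) * (j' + ℓ)| % s ≤ d + 3 :=
  stmt_11_general d m s ℓ k j' a hd hs ha hl hj
end

section
/- Let d ≥ 1, m ≥ 3, s = 2d+3, a ∈ {1,2}, and suppose ℓ = k·s − (−1)^a·(d+1)·m for some integer k, and j' ∈ {−1, 1}. Then d ≤ (|(d+a)·(m−1) − (j'+ℓ)| mod s) ≤ d+3. -/
/-!
Modulo `s = 2d + 3` the label difference across a twisted edge is congruent to `d + 3 - a - j'`,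
a residue in `[d, d + 3]`. This window is symmetric under `r ↦ s - r`, so the residue of the
absolute value lies in it as well.
-/

namespace Int

theorem neg_emod_mem_Icc {s d x : ℤ} (hd : 0 < d) (hx : x % s ∈ Set.Icc d (s - d)) :
    -x % s ∈ Set.Icc d (s - d) := by
  obtain ⟨hlo, hhi⟩ := hx
  have hs : 0 < s := by linarith
  have hneg : -x % s = s - x % s := by
    rw [Int.neg_emod, if_neg, Int.natAbs_of_nonneg hs.le]
    intro hdvd
    linarith [Int.emod_eq_zero_of_dvd hdvd]
  rw [hneg]
  constructor <;> linarith

theorem abs_emod_mem_Icc {s d x : ℤ} (hd : 0 < d) (hx : x % s ∈ Set.Icc d (s - d)) :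
    |x| % s ∈ Set.Icc d (s - d) := by
  rcases abs_choice x with h | h <;> rw [h]
  exacts [hx, neg_emod_mem_Icc hd hx]

end Int

theorem twisted_label_diff_modEq (d m k j' : ℤ) (a : ℕ) (ha : a = 1 ∨ a = 2) :
    (d + a) * (m - 1) - (j' + (k * (2 * d + 3) - (-1) ^ a * (d + 1) * m))
      ≡ d + 3 - a - j' [ZMOD 2 * d + 3] := by
  rw [Int.modEq_iff_dvd]
  rcases ha with rfl | rfl
  · exact ⟨k + 1, by push_cast; ring⟩
  · exact ⟨k + 1 - m, by push_cast; ring⟩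

theorem stmt_12_general (d m s ℓ k j' : ℤ) (a : ℕ) (hd : 1 ≤ d)
    (hs : s = 2 * d + 3) (ha : a = 1 ∨ a = 2)
    (hl : ℓ = k * s - (-1) ^ a * (d + 1) * m) (hj : j' = -1 ∨ j' = 1) :
    d ≤ |(d + a) * (m - 1) - (j' + ℓ)| % s ∧ |(d + a) * (m - 1) - (j' + ℓ)| % s ≤ d + 3 := by
  subst hs hl
  have hresidue : ((d + a) * (m - 1) - (j' + (k * (2 * d + 3) - (-1) ^ a * (d + 1) * m)))
      % (2 * d + 3) = d + 3 - a - j' :=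
    (twisted_label_diff_modEq d m k j' a ha).eq.trans (Int.emod_eq_of_lt (by omega) (by omega))
  have hwindow := Int.abs_emod_mem_Icc (s := 2 * d + 3) (d := d) (by omega)
    (by rw [hresidue]; constructor <;> omega)
  exact ⟨hwindow.1, by linarith [hwindow.2]⟩

theorem stmt_12 (d m s ℓ k j' : ℤ) (a : ℕ) (hd : 1 ≤ d) (hm : 3 ≤ m)
    (hs : s = 2 * d + 3) (ha : a = 1 ∨ a = 2)
    (hl : ℓ = k * s - (-1) ^ a * (d + 1) * m) (hj : j' = -1 ∨ j' = 1) :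
    d ≤ |(d + a) * (m - 1) - (j' + ℓ)| % s ∧ |(d + a) * (m - 1) - (j' + ℓ)| % s ≤ d + 3 :=
  stmt_12_general d m s ℓ k j' a hd hs ha hl hj
end

section
/- Let d ≥ 1, m ≥ 3, s = 2d+3, a ∈ {1,2}, and suppose ℓ = k·s + (−1)^a·2·m for some integer k, and j' ∈ {−2, 0, 2}. Then 1 ≤ (|m − 2 − (d+a)·(j'+ℓ)| mod s) ≤ 2d+2. -/
/-!
Modulo `s = 2d + 3` the twist factor `(-1)^a · 2` is inverted by `d + a`, since
`(d + 1)(-2) = 1 - s` and `(d + 2) · 2 = 1 + s`. Hence the `m`-dependence cancels and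
`m - 2 - (d + a)(j' + ℓ) ≡ -2 - (d + a) j' (mod s)`; for the six admissible pairs `(a, j')`
the right-hand side lies strictly between two consecutive multiples of `s`.
-/

theorem Int.not_dvd_of_lt_of_lt_mul_add_one {n m k : ℤ} (hn : 0 < n) (h1 : n * k < m)
    (h2 : m < n * (k + 1)) : ¬ n ∣ m := by
  rintro ⟨q, rfl⟩
  have hkq : k < q := (mul_lt_mul_iff_right₀ hn).mp h1
  have hqk : q < k + 1 := (mul_lt_mul_iff_right₀ hn).mp h2
  omega

theorem Int.abs_emod_mem_Icc_of_not_dvd {s x : ℤ} (hs : 0 < s) (h : ¬ s ∣ x) :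
    1 ≤ |x| % s ∧ |x| % s ≤ s - 1 := by
  have hne : |x| % s ≠ 0 := fun h0 => h ((dvd_abs s x).mp (Int.dvd_of_emod_eq_zero h0))
  have := Int.emod_nonneg |x| hs.ne'
  have := Int.emod_lt_of_pos |x| hs
  omega

theorem twist_mul_modEq_one (d : ℤ) {a : ℕ} (ha : a = 1 ∨ a = 2) :
    (d + a) * ((-1) ^ a * 2) ≡ 1 [ZMOD 2 * d + 3] := by
  rw [Int.modEq_iff_dvd]
  rcases ha with rfl | rfl
  · exact ⟨1, by push_cast; ring⟩
  · exact ⟨-1, by push_cast; ring⟩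

theorem sub_mul_add_modEq {s m ℓ j' c u : ℤ} (hℓ : ℓ ≡ u * m [ZMOD s])
    (hcu : c * u ≡ 1 [ZMOD s]) : m - 2 - c * (j' + ℓ) ≡ -2 - c * j' [ZMOD s] :=
  calc m - 2 - c * (j' + ℓ) ≡ m - 2 - c * (j' + u * m) [ZMOD s] := by gcongr
    _ = -2 - c * j' + (1 - c * u) * m := by ring
    _ ≡ -2 - c * j' + (1 - 1) * m [ZMOD s] := by gcongr
    _ = -2 - c * j' := by ring

theorem not_dvd_neg_two_sub_mul {d j' : ℤ} {a : ℕ} (hd : 1 ≤ d) (ha : a = 1 ∨ a = 2)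
    (hj : j' = -2 ∨ j' = 0 ∨ j' = 2) : ¬ 2 * d + 3 ∣ -2 - (d + a) * j' := by
  have hs : 0 < 2 * d + 3 := by omega
  rcases ha with rfl | rfl <;> rcases hj with rfl | rfl | rfl <;> push_cast
  · exact Int.not_dvd_of_lt_of_lt_mul_add_one (k := 0) hs (by linarith) (by linarith)
  · exact Int.not_dvd_of_lt_of_lt_mul_add_one (k := -1) hs (by linarith) (by linarith)
  · exact Int.not_dvd_of_lt_of_lt_mul_add_one (k := -2) hs (by linarith) (by linarith)
  · exact Int.not_dvd_of_lt_of_lt_mul_add_one (k := 0) hs (by linarith) (by linarith)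
  · exact Int.not_dvd_of_lt_of_lt_mul_add_one (k := -1) hs (by linarith) (by linarith)
  · exact Int.not_dvd_of_lt_of_lt_mul_add_one (k := -2) hs (by linarith) (by linarith)

theorem stmt_13_general (d m s ℓ k j' : ℤ) (a : ℕ) (hd : 1 ≤ d)
    (hs : s = 2 * d + 3) (ha : a = 1 ∨ a = 2)
    (hl : ℓ = k * s + (-1) ^ a * 2 * m) (hj : j' = -2 ∨ j' = 0 ∨ j' = 2) :
    1 ≤ |m - 2 - (d + a) * (j' + ℓ)| % s ∧ |m - 2 - (d + a) * (j' + ℓ)| % s ≤ 2 * d + 2 := by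
  subst hs
  have hℓ : ℓ ≡ ((-1) ^ a * 2) * m [ZMOD 2 * d + 3] := by
    rw [hl]
    exact Int.mul_modulus_add_modEq_iff.mpr rfl
  have hx := sub_mul_add_modEq (j' := j') hℓ (twist_mul_modEq_one d ha)
  have hndvd : ¬ 2 * d + 3 ∣ m - 2 - (d + a) * (j' + ℓ) :=
    hx.dvd_iff.not.mpr (not_dvd_neg_two_sub_mul hd ha hj)
  have := Int.abs_emod_mem_Icc_of_not_dvd (by omega) hndvd
  omega

theorem stmt_13 (d m s ℓ k j' : ℤ) (a : ℕ) (hd : 1 ≤ d) (hm : 3 ≤ m)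
    (hs : s = 2 * d + 3) (ha : a = 1 ∨ a = 2)
    (hl : ℓ = k * s + (-1) ^ a * 2 * m) (hj : j' = -2 ∨ j' = 0 ∨ j' = 2) :
    1 ≤ |m - 2 - (d + a) * (j' + ℓ)| % s ∧ |m - 2 - (d + a) * (j' + ℓ)| % s ≤ 2 * d + 2 :=
  stmt_13_general d m s ℓ k j' a hd hs ha hl hj
end

section
/- Let d ≥ 1, m ≥ 3, s = 2d+3, a ∈ {1,2}, and suppose ℓ = k·s + (−1)^a·2·d·m for some integer k. Then (|d·(m−2) − (d+a)·ℓ| mod s) equals 2d or 3; in particular 1 ≤ (|d·(m−2) − (d+a)·ℓ| mod s) ≤ 2d+2. -/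
/-! Modulo `s = 2d + 3` the value `ℓ` is `∓ 2dm`, and since `(d + 1)(-2) = 1 - s` and
`(d + 2) 2 = s + 1`, in both cases `(d + a) ℓ ≡ d m`. Hence `d (m - 2) - (d + a) ℓ ≡ -2d ≡ 3`,
and taking the absolute value either keeps the residue `3` or replaces it by `s - 3 = 2d`. -/

theorem Int.abs_emod_eq_or_of_emod_eq {x s r : ℤ} (hs : 0 < s) (hx : x % s = r) (hr : 0 < r) :
    |x| % s = r ∨ |x| % s = s - r := by
  rcases abs_cases x with ⟨habs, -⟩ | ⟨habs, -⟩ <;> rw [habs]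
  · exact Or.inl hx
  · right
    have hlt : r < s := hx ▸ Int.emod_lt_of_pos x hs
    have hneg : -x = (s - r) + s * (-(x / s) - 1) := by
      rw [← hx, Int.emod_def]; ring
    rw [hneg, Int.add_mul_emod_self_left, Int.emod_eq_of_lt (by omega) (by omega)]

theorem labelGap_modEq (d m k : ℤ) {a : ℕ} (ha : a = 1 ∨ a = 2) :
    d * (m - 2) - (d + a) * (k * (2 * d + 3) + (-1) ^ a * 2 * d * m) ≡ 3 [ZMOD 2 * d + 3] := by
  rw [Int.modEq_iff_dvd]
  rcases ha with rfl | rfl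
  · exact ⟨1 - d * m + (d + 1) * k, by push_cast; ring⟩
  · exact ⟨1 + d * m + (d + 2) * k, by push_cast; ring⟩

theorem stmt_15_general (d m s ℓ k : ℤ) (a : ℕ) (hd : 1 ≤ d)
    (hs : s = 2 * d + 3) (ha : a = 1 ∨ a = 2)
    (hl : ℓ = k * s + (-1) ^ a * 2 * d * m) :
    (|d * (m - 2) - (d + a) * ℓ| % s = 2 * d ∨ |d * (m - 2) - (d + a) * ℓ| % s = 3) ∧
      1 ≤ |d * (m - 2) - (d + a) * ℓ| % s ∧ |d * (m - 2) - (d + a) * ℓ| % s ≤ 2 * d + 2 := by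
  subst hl hs
  have hres : (d * (m - 2) - (d + a) * (k * (2 * d + 3) + (-1) ^ a * 2 * d * m)) % (2 * d + 3)
      = 3 :=
    Eq.trans (labelGap_modEq d m k ha) (Int.emod_eq_of_lt (by norm_num) (by omega))
  rcases Int.abs_emod_eq_or_of_emod_eq (by omega) hres (by norm_num) with h | h <;> rw [h] <;> omega

theorem stmt_15 (d m s ℓ k : ℤ) (a : ℕ) (hd : 1 ≤ d) (hm : 3 ≤ m)
    (hs : s = 2 * d + 3) (ha : a = 1 ∨ a = 2)
    (hl : ℓ = k * s + (-1) ^ a * 2 * d * m) :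
    (|d * (m - 2) - (d + a) * ℓ| % s = 2 * d ∨ |d * (m - 2) - (d + a) * ℓ| % s = 3) ∧
      1 ≤ |d * (m - 2) - (d + a) * ℓ| % s ∧ |d * (m - 2) - (d + a) * ℓ| % s ≤ 2 * d + 2 :=
  stmt_15_general d m s ℓ k a hd hs ha hl
end

section
/- If G is a graph with maximum degree Δ and G contains a vertex with Δ neighbours each of which has degree Δ, then for every integer d with 1 ≤ d ≤ Δ, the L(d,1)-labeling number satisfies λ_1^d(G) ≥ Δ + 2d − 2. -/
/-- `f` is an `L(d,1)`-labeling of `G`: labels of adjacent vertices differ by at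
least `d`, and labels of vertices at distance exactly two differ by at least `1`. -/
def IsLD1Labeling {V : Type*} (G : SimpleGraph V) (d : ℕ) (f : V → ℕ) : Prop :=
  (∀ u v, G.Adj u v → (d : ℤ) ≤ |(f u : ℤ) - (f v : ℤ)|) ∧
  (∀ u v, G.dist u v = 2 → (1 : ℤ) ≤ |(f u : ℤ) - (f v : ℤ)|)

/-- The span of a labeling: the largest label minus the smallest label. -/
noncomputable def labelSpan {V : Type*} (f : V → ℕ) : ℕ :=
  sSup (Set.range f) - sInf (Set.range f)

/-- `λ₁ᵈ(G)`: the minimum span over all `L(d,1)`-labelings of `G`. -/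
noncomputable def lambdaLD1 {V : Type*} (G : SimpleGraph V) (d : ℕ) : ℕ :=
  sInf {k | ∃ f : V → ℕ, IsLD1Labeling G d f ∧ labelSpan f = k}

/-!
Let `L` and `U` be the least and the largest label. The neighbours of a vertex `x` are pairwise
at distance at most two, so they carry distinct labels, none of them in the window
`(f x - d, f x + d)`. If `L + d - 1 ≤ f x ≤ U - d + 1` ("`x` is central"), this window of
`2d - 1` labels lies inside `[L, U]`, whence `U - L + 1 ≥ deg x + 2d - 1`. Some vertex of the
closed neighbourhood of `v`, where all degrees equal `Δ`, is central: if `f v > U - d + 1`, no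
neighbour of `v` lies above `U - d + 1` as well, so a non-central neighbourhood would squeeze
`deg v ≥ d` distinct labels into the `d - 1` values below `L + d - 1`; the case
`f v < L + d - 1` follows by reflecting labels.
-/

namespace SimpleGraph

lemma dist_eq_two_of_adj_of_adj {V : Type*} {G : SimpleGraph V} {x u w : V}
    (hu : G.Adj x u) (hw : G.Adj x w) (huw : u ≠ w) (hnadj : ¬G.Adj u w) : G.dist u w = 2 := by
  have : G.edist u w = 2 :=
    edist_eq_two_iff.mpr ⟨huw, hnadj, x, G.mem_commonNeighbors.mpr ⟨hu.symm, hw.symm⟩⟩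
  rw [dist, this]
  rfl

end SimpleGraph

lemma isLD1Labeling_mul_of_injective {V : Type*} (G : SimpleGraph V) (d : ℕ) {g : V → ℕ}
    (hg : Function.Injective g) : IsLD1Labeling G d fun x => (d + 1) * g x := by
  have hsep : ∀ u w, u ≠ w →
      (d : ℤ) + 1 ≤ |(((d + 1) * g u : ℕ) : ℤ) - (((d + 1) * g w : ℕ) : ℤ)| := by
    intro u w huw
    have hne : (g u : ℤ) ≠ g w := by exact_mod_cast hg.ne huw
    push_cast
    rw [← mul_sub, abs_mul, abs_of_pos (by positivity : (0 : ℤ) < d + 1)]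
    exact le_mul_of_one_le_right (by positivity) (Int.one_le_abs (sub_ne_zero.mpr hne))
  refine ⟨fun u w h => ?_, fun u w h => ?_⟩
  · linarith [hsep u w h.ne]
  · have huw : u ≠ w := by rintro rfl; simp at h
    linarith [hsep u w huw, (show (0 : ℤ) ≤ d by positivity)]

lemma exists_isLD1Labeling {V : Type*} [Countable V] (G : SimpleGraph V) (d : ℕ) :
    ∃ f, IsLD1Labeling G d f :=
  let ⟨_, hg⟩ := Countable.exists_injective_nat V
  ⟨_, isLD1Labeling_mul_of_injective G d hg⟩

namespace IsLD1Labeling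

variable {V : Type*} {G : SimpleGraph V} {d : ℕ} {f : V → ℕ}

lemma injOn_neighborSet (hf : IsLD1Labeling G d f) (hd : 1 ≤ d) (x : V) :
    Set.InjOn f (G.neighborSet x) := by
  intro u hu w hw hfuw
  by_contra huw
  have hzero : |(f u : ℤ) - f w| = 0 := by simp [hfuw]
  by_cases hadj : G.Adj u w
  · have := hf.1 u w hadj
    omega
  · have := hf.2 u w (SimpleGraph.dist_eq_two_of_adj_of_adj hu hw huw hadj)
    omega

lemma const_sub (hf : IsLD1Labeling G d f) {U : ℕ} (hU : ∀ x, f x ≤ U) :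
    IsLD1Labeling G d fun x => U - f x := by
  have habs : ∀ u w,
      |((U - f u : ℕ) : ℤ) - ((U - f w : ℕ) : ℤ)| = |(f u : ℤ) - f w| := by
    intro u w
    rw [Nat.cast_sub (hU u), Nat.cast_sub (hU w), sub_sub_sub_cancel_left, abs_sub_comm]
  exact ⟨fun u w h => habs u w ▸ hf.1 u w h, fun u w h => habs u w ▸ hf.2 u w h⟩


section Fintype

variable [Fintype V] [DecidableRel G.Adj]

lemma degree_le_card_of_forall_adj_mem (hf : IsLD1Labeling G d f) (hd : 1 ≤ d) {x : V}
    {s : Finset ℕ} (hs : ∀ u, G.Adj x u → f u ∈ s) : G.degree x ≤ s.card := by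
  rw [← G.card_neighborFinset_eq_degree]
  refine Finset.card_le_card_of_injOn f (fun u hu => hs u ?_) ?_
  · simpa using hu
  · simpa using hf.injOn_neighborSet hd x

variable {L U : ℕ}

lemma degree_add_two_mul_sub_two_le (hf : IsLD1Labeling G d f) (hd : 1 ≤ d)
    (hL : ∀ y, L ≤ f y) (hU : ∀ y, f y ≤ U) {x : V} (hxL : L + d ≤ f x + 1)
    (hxU : f x + d ≤ U + 1) : G.degree x + 2 * d - 2 ≤ U - L := by
  have hdeg := hf.degree_le_card_of_forall_adj_mem hd
    (s := Finset.Icc L U \ Finset.Icc (f x + 1 - d) (f x + d - 1)) fun u hu => by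
      have := hL u
      have := hU u
      rw [Finset.mem_sdiff, Finset.mem_Icc, Finset.mem_Icc]
      rcases le_abs.mp (hf.1 x u hu) with h | h <;> omega
  have hwindow : Finset.Icc (f x + 1 - d) (f x + d - 1) ⊆ Finset.Icc L U := by
    intro t ht
    rw [Finset.mem_Icc] at ht ⊢
    omega
  rw [Finset.card_sdiff_of_subset hwindow, Nat.card_Icc, Nat.card_Icc] at hdeg
  omega

lemma exists_adj_central_of_top (hf : IsLD1Labeling G d f) (hd : 1 ≤ d)
    (hL : ∀ y, L ≤ f y) (hU : ∀ y, f y ≤ U) {v : V} (hdeg : d ≤ G.degree v)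
    (hv : U + 2 ≤ f v + d) : ∃ u, G.Adj v u ∧ L + d ≤ f u + 1 ∧ f u + d ≤ U + 1 := by
  by_contra! hnone
  have hbot : ∀ u, G.Adj v u → f u ∈ Finset.Ico L (L + d - 1) := by
    intro u hu
    have := hnone u hu
    have := hL u
    have := hU u
    have := hU v
    rw [Finset.mem_Ico]
    rcases le_abs.mp (hf.1 v u hu) with h | h <;> omega
  have := hf.degree_le_card_of_forall_adj_mem hd hbot
  rw [Nat.card_Ico] at this
  omega

lemma exists_central_of_le_degree (hf : IsLD1Labeling G d f) (hd : 1 ≤ d)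
    (hL : ∀ y, L ≤ f y) (hU : ∀ y, f y ≤ U) {v : V} (hdeg : d ≤ G.degree v) :
    ∃ x, (x = v ∨ G.Adj v x) ∧ L + d ≤ f x + 1 ∧ f x + d ≤ U + 1 := by
  by_cases hvL : L + d ≤ f v + 1
  · by_cases hvU : f v + d ≤ U + 1
    · exact ⟨v, Or.inl rfl, hvL, hvU⟩
    · obtain ⟨u, hu, hcentral⟩ := hf.exists_adj_central_of_top hd hL hU hdeg (by omega)
      exact ⟨u, Or.inr hu, hcentral⟩
  · obtain ⟨u, hu, hu0, huU⟩ := (hf.const_sub hU).exists_adj_central_of_top hd (L := 0)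
      (U := U - L) (fun _ => Nat.zero_le _) (fun y => by have := hL y; omega) hdeg
      (by have := hL v; have := hU v; omega)
    have := hL u
    have := hU u
    exact ⟨u, Or.inr hu, by omega, by omega⟩

lemma le_labelSpan (hf : IsLD1Labeling G d f) (hd : 1 ≤ d) {Δ : ℕ} {v : V}
    (hv : G.degree v = Δ) (hnb : ∀ u ∈ G.neighborFinset v, G.degree u = Δ) (hdΔ : d ≤ Δ) :
    Δ + 2 * d - 2 ≤ labelSpan f := by
  have hL : ∀ y, sInf (Set.range f) ≤ f y := fun y => Nat.sInf_le ⟨y, rfl⟩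
  have hU : ∀ y, f y ≤ sSup (Set.range f) :=
    fun y => le_csSup (Set.finite_range f).bddAbove ⟨y, rfl⟩
  obtain ⟨x, hxv, hxL, hxU⟩ := hf.exists_central_of_le_degree hd hL hU (hv ▸ hdΔ)
  have hx : G.degree x = Δ := by
    rcases hxv with rfl | hx
    · exact hv
    · exact hnb x (by simpa using hx)
  exact hx ▸ hf.degree_add_two_mul_sub_two_le hd hL hU hxL hxU

end Fintype

end IsLD1Labeling

theorem stmt_16_general {V : Type*} [Fintype V] (G : SimpleGraph V) [DecidableRel G.Adj]
    (Δ : ℕ)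
    (v : V) (hv : G.degree v = Δ)
    (hnb : ∀ u ∈ G.neighborFinset v, G.degree u = Δ)
    (d : ℕ) (hd1 : 1 ≤ d) (hdΔ : d ≤ Δ) :
    Δ + 2 * d - 2 ≤ lambdaLD1 G d := by
  obtain ⟨f, hf⟩ := exists_isLD1Labeling G d
  refine le_csInf ⟨_, f, hf, rfl⟩ ?_
  rintro _ ⟨g, hg, rfl⟩
  exact hg.le_labelSpan hd1 hv hnb hdΔ

theorem stmt_16 {V : Type*} [Fintype V] (G : SimpleGraph V) [DecidableRel G.Adj]
    (Δ : ℕ) (hΔ : G.maxDegree = Δ)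
    (v : V) (hv : G.degree v = Δ)
    (hnb : ∀ u ∈ G.neighborFinset v, G.degree u = Δ)
    (d : ℕ) (hd1 : 1 ≤ d) (hdΔ : d ≤ Δ) :
    Δ + 2 * d - 2 ≤ lambdaLD1 G d :=
  stmt_16_general G Δ v hv hnb d hd1 hdΔ
end

section
/- Let d ≥ 1, m ≥ 3, s = 2d+3, and let n be a positive multiple of s. Suppose ℓ = (k·s + (−1)^a·2·m) mod n for some a ∈ {1,2} and integer k. Then the function f on Z_m × Z_n given by f(i,j) = (i + (d+a)·j) mod s is an L(d,1)-labeling of the direct graph bundle C_m ×^{σ_ℓ} C_n with labels in {0,1,...,2d+2}; consequently λ_1^d(C_m ×^{σ_ℓ} C_n) ≤ 2d+2. -/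
/-- The direct graph bundle `C_m ×^{σ_ℓ} C_n` with base `C_m`, fibre `C_n` and
cyclic `ℓ`-shift on the edge from `m-1` to `0`.  Vertices `(i,j)` and
`(i+1, j±1)` are adjacent for `i ≠ m-1`, and `(m-1, j)` is adjacent to
`(0, j±1+ℓ)`. -/
def directBundle (m n : ℕ) (ℓ : ZMod n) : SimpleGraph (ZMod m × ZMod n) :=
  SimpleGraph.fromRel (fun u v =>
    v.1 = u.1 + 1 ∧
      ((u.1 = -1 ∧ (v.2 = u.2 + 1 + ℓ ∨ v.2 = u.2 - 1 + ℓ)) ∨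
       (u.1 ≠ -1 ∧ (v.2 = u.2 + 1 ∨ v.2 = u.2 - 1))))


/-! Modulo `s = 2d+3`, every edge `(i, j) → (i+1, j±1)` of the bundle changes the label by
`1 ± (d+a)`, which is `-(d+1)` or `-d`, so the labels of adjacent vertices differ by at least `d`.
The twist `ℓ ≡ ∓2m (mod s)` gives `(d+a) ℓ ≡ m`, which is exactly what makes the wrap-around edge,
along which `i` drops from `m-1` to `0`, change the label by the same amount. Along a path of
length two the two changes either add up to `1`, `2` or `3` (mod `s`), or cancel; they cancel only
for equal steps, and then the endpoints coincide. -/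

namespace ZMod

lemma val_neg_one_add_one (m : ℕ) [NeZero m] : (-1 : ZMod m).val + 1 = m := by
  obtain ⟨m, rfl⟩ := Nat.exists_eq_succ_of_ne_zero (NeZero.ne m)
  rw [val_neg_one]

lemma val_add_one_of_ne_neg_one {m : ℕ} [NeZero m] {x : ZMod m} (hx : x ≠ -1) :
    (x + 1).val = x.val + 1 := by
  have hlt : x.val + 1 < m := by
    have := val_injective m |>.ne hx
    have := val_neg_one_add_one m
    have := x.val_lt
    omega
  rw [val_add, val_one_eq_one_mod, Nat.mod_eq_of_lt (by omega : 1 < m), Nat.mod_eq_of_lt hlt]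

lemma natCast_val_add_one {m s : ℕ} [NeZero m] (x : ZMod m) :
    ((x + 1).val : ZMod s) = x.val + 1 - if x = -1 then (m : ZMod s) else 0 := by
  split_ifs with hx
  · have h : ((-1 : ZMod m).val : ZMod s) + 1 = m := by
      exact_mod_cast congrArg (Nat.cast (R := ZMod s)) (val_neg_one_add_one m)
    rw [hx, neg_add_cancel, val_zero, Nat.cast_zero]
    linear_combination -h
  · rw [val_add_one_of_ne_neg_one hx]
    push_cast
    ring

end ZMod

section Bundle

variable {m n : ℕ} (ℓ : ZMod n)

def bundleSucc (ε : ℤˣ) (u : ZMod m × ZMod n) : ZMod m × ZMod n :=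
  (u.1 + 1, u.2 + ((ε : ℤ) : ZMod n) + if u.1 = -1 then ℓ else 0)

lemma bundleSucc_injective (ε : ℤˣ) : Function.Injective (bundleSucc (m := m) ℓ ε) := by
  rintro ⟨i, j⟩ ⟨i', j'⟩ h
  obtain ⟨hi, hj⟩ := Prod.mk.inj h
  obtain rfl : i = i' := add_right_cancel hi
  simpa using hj

lemma exists_bundleSucc_of_adj {u v : ZMod m × ZMod n} (h : (directBundle m n ℓ).Adj u v) :
    (∃ ε, v = bundleSucc ℓ ε u) ∨ ∃ ε, u = bundleSucc ℓ ε v := by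
  suffices key : ∀ u v : ZMod m × ZMod n, v.1 = u.1 + 1 ∧
      ((u.1 = -1 ∧ (v.2 = u.2 + 1 + ℓ ∨ v.2 = u.2 - 1 + ℓ)) ∨
       (u.1 ≠ -1 ∧ (v.2 = u.2 + 1 ∨ v.2 = u.2 - 1))) → ∃ ε, v = bundleSucc ℓ ε u by
    rw [directBundle, SimpleGraph.fromRel_adj] at h
    exact h.2.imp (key u v) (key v u)
  rintro ⟨i, j⟩ ⟨i', j'⟩ ⟨rfl, ⟨hi, rfl | rfl⟩ | ⟨hi, rfl | rfl⟩⟩ <;> dsimp only at hi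
  · exact ⟨1, by simp [bundleSucc, hi]⟩
  · exact ⟨-1, by simp [bundleSucc, hi, sub_eq_add_neg]⟩
  · exact ⟨1, by simp [bundleSucc, hi]⟩
  · exact ⟨-1, by simp [bundleSucc, hi, sub_eq_add_neg]⟩

end Bundle

lemma SimpleGraph.exists_adj_adj_of_dist_eq_two {V : Type*} {G : SimpleGraph V} {u v : V}
    (h : G.dist u v = 2) : u ≠ v ∧ ∃ w, G.Adj u w ∧ G.Adj w v := by
  have hreach : G.Reachable u v := by
    by_contra hr
    have := SimpleGraph.dist_eq_zero_of_not_reachable hr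
    omega
  have hedist : G.edist u v = 2 := by
    rw [← hreach.coe_dist_eq_edist, h]
    rfl
  obtain ⟨hne, -, w, hw⟩ := SimpleGraph.edist_eq_two_iff.mp hedist
  rw [SimpleGraph.mem_commonNeighbors] at hw
  exact ⟨hne, w, hw.1, hw.2.symm⟩

lemma lambdaLD1_le_of_isLD1Labeling {V : Type*} {G : SimpleGraph V} {d B : ℕ} {f : V → ℕ}
    (hf : IsLD1Labeling G d f) (hB : ∀ v, f v ≤ B) : lambdaLD1 G d ≤ B :=
  calc lambdaLD1 G d ≤ labelSpan f := Nat.sInf_le ⟨f, hf, rfl⟩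
    _ ≤ sSup (Set.range f) := Nat.sub_le _ _
    _ ≤ B := csSup_le' (Set.forall_mem_range.mpr hB)

section Label

variable {m n : ℕ}

def cyclicLabel (s D : ℕ) (p : ZMod m × ZMod n) : ℕ := (p.1.val + D * p.2.val) % s

def labelStep (s D : ℕ) (ε : ℤˣ) : ZMod s := 1 + D * ((ε : ℤ) : ZMod s)

def HasLabelStep (ℓ : ZMod n) (s D : ℕ) (f : ZMod m × ZMod n → ℕ) : Prop :=
  ∀ ε u, (f (bundleSucc ℓ ε u) : ZMod s) = f u + labelStep s D ε

lemma hasLabelStep_cyclicLabel [NeZero m] [NeZero n] {s D : ℕ} (hsn : s ∣ n)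
    {ℓ : ZMod n} (hℓ : (D : ZMod s) * ZMod.cast ℓ = m) :
    HasLabelStep ℓ s D (cyclicLabel (m := m) s D) := by
  intro ε u
  simp only [cyclicLabel, bundleSucc, labelStep, ZMod.natCast_mod, Nat.cast_add, Nat.cast_mul,
    ZMod.natCast_val_add_one]
  split_ifs
  all_goals simp only [ZMod.natCast_val, ZMod.cast_add hsn, ZMod.cast_intCast hsn, ZMod.cast_zero]
  · linear_combination hℓ
  · ring

end Label

section Step

variable {d a : ℕ}

lemma two_mul_add_three_eq_zero (d : ℕ) : 2 * (d : ZMod (2 * d + 3)) + 3 = 0 := by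
  exact_mod_cast ZMod.natCast_self (2 * d + 3)

lemma labelStep_eq (ha : a = 1 ∨ a = 2) (ε : ℤˣ) :
    labelStep (2 * d + 3) (d + a) ε = ((-(d + 1) : ℤ) : ZMod (2 * d + 3)) ∨
      labelStep (2 * d + 3) (d + a) ε = ((-d : ℤ) : ZMod (2 * d + 3)) := by
  have hs := two_mul_add_three_eq_zero d
  unfold labelStep
  push_cast
  rcases ha with rfl | rfl <;> rcases Int.units_eq_one_or ε with rfl | rfl <;> push_cast
  · exact .inl (by linear_combination hs)
  · exact .inr (by ring)
  · exact .inr (by linear_combination hs)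
  · exact .inl (by ring)

lemma labelStep_injective (ha : a = 1 ∨ a = 2) :
    Function.Injective (labelStep (2 * d + 3) (d + a)) := by
  have hs := two_mul_add_three_eq_zero d
  have : Fact (1 < 2 * d + 3) := ⟨by omega⟩
  intro ε₁ ε₂ h
  unfold labelStep at h
  apply Units.val_injective
  rcases ha with rfl | rfl <;>
    rcases Int.units_eq_one_or ε₁ with rfl | rfl <;> rcases Int.units_eq_one_or ε₂ with rfl | rfl
  all_goals first | rfl | exfalso
  all_goals push_cast at h
  -- the two steps differ by `2 (d + a) = 2a - 3 = ±1`
  all_goals apply one_ne_zero (α := ZMod (2 * d + 3))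
  · linear_combination hs - h
  · linear_combination hs + h
  · linear_combination h - hs
  · linear_combination -h - hs

lemma labelStep_add_labelStep_ne_zero (hd : 1 ≤ d) (ha : a = 1 ∨ a = 2) (ε₁ ε₂ : ℤˣ) :
    labelStep (2 * d + 3) (d + a) ε₁ + labelStep (2 * d + 3) (d + a) ε₂ ≠ 0 := by
  have hs := two_mul_add_three_eq_zero d
  have hne : ∀ k : ℕ, 1 ≤ k → k ≤ 3 → (k : ZMod (2 * d + 3)) ≠ 0 := fun k hk1 hk3 h =>
    absurd (Nat.le_of_dvd (by omega) ((ZMod.natCast_eq_zero_iff k _).mp h)) (by omega)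
  intro h
  rcases labelStep_eq ha ε₁ with h₁ | h₁ <;> rcases labelStep_eq ha ε₂ with h₂ | h₂ <;>
    rw [h₁, h₂] at h <;> push_cast at h
  · exact hne 1 le_rfl (by norm_num) (by push_cast; linear_combination h + hs)
  · exact hne 2 (by norm_num) (by norm_num) (by push_cast; linear_combination h + hs)
  · exact hne 2 (by norm_num) (by norm_num) (by push_cast; linear_combination h + hs)
  · exact hne 3 (by norm_num) le_rfl (by push_cast; linear_combination h + hs)

end Step

lemma le_natAbs_sub_of_natCast_eq {s x y : ℕ} {c : ℤ} (h : (x : ZMod s) = y + c)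
    (hc : c.natAbs ≤ s / 2) : c.natAbs ≤ ((x : ℤ) - y).natAbs :=
  ZMod.natAbs_min_of_le_div_two s c _ (by push_cast; rw [h]; ring) hc

section Labeling

variable {d a m n : ℕ} {ℓ : ZMod n} {f : ZMod m × ZMod n → ℕ}

lemma le_abs_sub_of_directBundle_adj (ha : a = 1 ∨ a = 2)
    (hf : HasLabelStep ℓ (2 * d + 3) (d + a) f)
    {u v : ZMod m × ZMod n} (h : (directBundle m n ℓ).Adj u v) :
    (d : ℤ) ≤ |(f u : ℤ) - f v| := by
  suffices key : ∀ ε u, (d : ℤ) ≤ |(f (bundleSucc ℓ ε u) : ℤ) - f u| by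
    rcases exists_bundleSucc_of_adj ℓ h with ⟨ε, rfl⟩ | ⟨ε, rfl⟩
    · rw [abs_sub_comm]; exact key ε u
    · exact key ε v
  intro ε u
  rw [← Int.natCast_natAbs]
  have hfu := hf ε u
  rcases labelStep_eq (d := d) ha ε with hε | hε <;> rw [hε] at hfu
  · have := le_natAbs_sub_of_natCast_eq hfu (by omega)
    omega
  · have := le_natAbs_sub_of_natCast_eq hfu (by omega)
    omega

lemma natCast_ne_of_directBundle_dist_eq_two (hd : 1 ≤ d) (ha : a = 1 ∨ a = 2)
    (hf : HasLabelStep ℓ (2 * d + 3) (d + a) f)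
    {u v : ZMod m × ZMod n} (h : (directBundle m n ℓ).dist u v = 2) :
    (f u : ZMod (2 * d + 3)) ≠ f v := by
  obtain ⟨hne, w, huw, hwv⟩ := SimpleGraph.exists_adj_adj_of_dist_eq_two h
  intro heq
  rcases exists_bundleSucc_of_adj ℓ huw with ⟨ε₁, rfl⟩ | ⟨ε₁, rfl⟩ <;>
    rcases exists_bundleSucc_of_adj ℓ hwv with ⟨ε₂, h₂⟩ | ⟨ε₂, h₂⟩
  · rw [h₂, hf, hf] at heq
    exact labelStep_add_labelStep_ne_zero hd ha ε₁ ε₂ (by linear_combination -heq)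
  · have := congrArg (fun x => (f x : ZMod (2 * d + 3))) h₂
    simp only [hf ε₁ u, hf ε₂ v, heq] at this
    obtain rfl : ε₁ = ε₂ := labelStep_injective ha (add_left_cancel this)
    exact hne (bundleSucc_injective ℓ ε₁ h₂)
  · rw [h₂, hf, hf] at heq
    obtain rfl : ε₁ = ε₂ := labelStep_injective ha (add_left_cancel heq)
    exact hne h₂.symm
  · rw [h₂, hf, hf] at heq
    exact labelStep_add_labelStep_ne_zero hd ha ε₂ ε₁ (by linear_combination heq)

lemma isLD1Labeling_directBundle (hd : 1 ≤ d) (ha : a = 1 ∨ a = 2)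
    (hf : HasLabelStep ℓ (2 * d + 3) (d + a) f) :
    IsLD1Labeling (directBundle m n ℓ) d f := by
  refine ⟨fun u v h => le_abs_sub_of_directBundle_adj ha hf h, fun u v h => ?_⟩
  have hne : f u ≠ f v := fun h' =>
    natCast_ne_of_directBundle_dist_eq_two hd ha hf h (congrArg _ h')
  exact Int.one_le_abs (sub_ne_zero.mpr (by exact_mod_cast hne))

end Labeling

theorem stmt_17 (d m s n : ℕ) (a : ℕ) (k ℓ : ℤ) (c : ℕ)
    (hd : 1 ≤ d) (hm : 3 ≤ m) (hs : s = 2 * d + 3)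
    (hc : 1 ≤ c) (hn : n = c * s)
    (ha : a = 1 ∨ a = 2)
    (hl : ℓ = (k * (s : ℤ) + (-1) ^ a * 2 * (m : ℤ)) % (n : ℤ)) :
    IsLD1Labeling (directBundle m n (ℓ : ZMod n)) d
        (fun p => (p.1.val + (d + a) * p.2.val) % s) ∧
      (∀ p : ZMod m × ZMod n, (p.1.val + (d + a) * p.2.val) % s ≤ 2 * d + 2) ∧
      lambdaLD1 (directBundle m n (ℓ : ZMod n)) d ≤ 2 * d + 2 := by
  subst hs hn
  have : NeZero m := ⟨by omega⟩
  have : NeZero (c * (2 * d + 3)) := ⟨by positivity⟩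
  have hsn : 2 * d + 3 ∣ c * (2 * d + 3) := dvd_mul_left _ _
  have hwrap : ((d + a : ℕ) : ZMod (2 * d + 3)) * ZMod.cast (ℓ : ZMod (c * (2 * d + 3))) = m := by
    have hs := two_mul_add_three_eq_zero d
    rw [hl, ZMod.intCast_mod, ZMod.cast_intCast hsn]
    push_cast
    rcases ha with rfl | rfl
    · linear_combination ((d + 1) * k - m) * hs
    · linear_combination ((d + 2) * k + m) * hs
  have hlabel := isLD1Labeling_directBundle hd ha (hasLabelStep_cyclicLabel hsn hwrap)
  have hbound : ∀ p : ZMod m × ZMod (c * (2 * d + 3)),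
      cyclicLabel (2 * d + 3) (d + a) p ≤ 2 * d + 2 :=
    fun p => Nat.le_of_lt_succ (Nat.mod_lt _ (by omega))
  exact ⟨hlabel, hbound, lambdaLD1_le_of_isLD1Labeling hlabel hbound⟩
end
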